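/- Let A be a DFA on n states, call a subset S of states with |S| = 2 reducible if some single symbol of A merges S, and let ρ₂ be the set of such reducible pairs. If (S₁,P₁),…,(S_ℓ,P_ℓ) is a Frankl–Pin sequence with all Pᵢ ∈ ρ₂ and all Sᵢ of size k reducible in A, then for any extension B of A that is synchronizing, and any k-subset T of states, there is a word of B of length at most C(n−k+2,2) − ℓ taking T to a subset which is either of size < k or reducible in A. -/

import Mathlib

/-- Action of a word over an alphabet `σ` acting on states `Q`. -/
def wordAct {Q σ : Type*} (act : σ → Q → Q) (w : List σ) (q : Q) : Q :=
  w.foldl (fun q x => act x q) q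

/-- A subset `S` is reducible in a DFA if some symbol merges two of its
elements. -/
def ReducibleIn {Q σ : Type*} (act : σ → Q → Q) (S : Finset Q) : Prop :=
  ∃ x : σ, ∃ p ∈ S, ∃ q ∈ S, p ≠ q ∧ act x p = act x q

private lemma wordAct_append' {Q σ : Type*} (act : σ → Q → Q) (u v : List σ) (q : Q) :
    wordAct act (u ++ v) q = wordAct act v (wordAct act u q) := by
  simp [wordAct, List.foldl_append]

private lemma image_wordAct_append {Q σ : Type*} [DecidableEq Q] (act : σ → Q → Q)
    (u v : List σ) (T : Finset Q) :
    T.image (wordAct act (u ++ v)) = (T.image (wordAct act u)).image (wordAct act v) := by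
  rw [Finset.image_image]
  exact Finset.image_congr fun q _ => wordAct_append' act u v q

private lemma merge_card {Q : Type*} [DecidableEq Q] (f : Q → Q) (U : Finset Q) {a b : Q}
    (ha : a ∈ U) (hb : b ∈ U) (hne : a ≠ b) (heq : f a = f b) :
    (U.image f).card < U.card := by
  have hsub : U.image f ⊆ (U.erase a).image f := by
    intro y hy
    obtain ⟨x, hx, rfl⟩ := Finset.mem_image.mp hy
    by_cases hxa : x = a
    · subst hxa
      rw [heq]
      exact Finset.mem_image_of_mem f (Finset.mem_erase.mpr ⟨hne.symm, hb⟩)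
    · exact Finset.mem_image_of_mem f (Finset.mem_erase.mpr ⟨hxa, hx⟩)
  calc (U.image f).card ≤ ((U.erase a).image f).card := Finset.card_le_card hsub
    _ ≤ (U.erase a).card := Finset.card_image_le
    _ < U.card := Finset.card_erase_lt_of_mem ha

private lemma reducibleIn_mono {Q σ : Type*} (act : σ → Q → Q) {U V : Finset Q}
    (hUV : U ⊆ V) (h : ReducibleIn act U) : ReducibleIn act V := by
  obtain ⟨x, a, ha, c, hc, hne, heq⟩ := h
  exact ⟨x, a, hUV ha, c, hUV hc, hne, heq⟩

open Finset Matrix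

private lemma fin_pairs_card (d : ℕ) :
    ((Finset.univ.filter fun rs : Fin d × Fin d => rs.1 < rs.2)).card ≤ d.choose 2 := by
  have h := Finset.card_le_card_of_injOn
    (f := fun rs : Fin d × Fin d => ({rs.1, rs.2} : Finset (Fin d)))
    (s := Finset.univ.filter fun rs : Fin d × Fin d => rs.1 < rs.2)
    (t := Finset.univ.powersetCard 2)
    (by
      intro rs hrs
      simp only [Finset.mem_coe, Finset.mem_filter] at hrs
      rw [Finset.mem_coe, Finset.mem_powersetCard]
      exact ⟨Finset.subset_univ _, Finset.card_pair hrs.2.ne⟩)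
    (by
      intro a ha b hb hab
      simp only [Finset.mem_coe, Finset.mem_filter] at ha hb
      have hab' : ({a.1, a.2} : Finset (Fin d)) = {b.1, b.2} := hab
      have h1 : a.1 ∈ ({b.1, b.2} : Finset (Fin d)) := by rw [← hab']; simp
      have h2 : a.2 ∈ ({b.1, b.2} : Finset (Fin d)) := by rw [← hab']; simp
      simp only [Finset.mem_insert, Finset.mem_singleton] at h1 h2
      rcases h1 with h1 | h1 <;> rcases h2 with h2 | h2
      · exact absurd (h1.trans h2.symm) ha.2.ne
      · exact Prod.ext h1 h2
      · have := ha.2; rw [h1, h2] at this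
        exact absurd (hb.2.trans this) (lt_irrefl _)
      · exact absurd (h1.trans h2.symm) ha.2.ne)
  calc _ ≤ (Finset.univ.powersetCard 2).card := h
    _ = d.choose 2 := by rw [Finset.card_powersetCard]; simp

private lemma det_updateRow_finset_sum {n' : Type*} [DecidableEq n'] [Fintype n']
    {α : Type*} (A : Matrix n' n' ℝ) (j : n') (s : Finset α) (g : α → n' → ℝ) :
    (A.updateRow j (∑ a ∈ s, g a)).det = ∑ a ∈ s, (A.updateRow j (g a)).det := by
  induction s using Finset.cons_induction with
  | empty =>
      rw [Finset.sum_empty, Finset.sum_empty]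
      exact Matrix.det_eq_zero_of_row_eq_zero j (fun c => by simp)
  | cons a s ha ih =>
      rw [Finset.sum_cons, Finset.sum_cons, Matrix.det_updateRow_add, ih]

private lemma updateRow_comm01 {d : ℕ} (M : Matrix (Fin (d + 2)) (Fin (d + 2)) ℝ)
    (x y : Fin (d + 2) → ℝ) :
    (M.updateRow 0 x).updateRow 1 y = (M.updateRow 1 y).updateRow 0 x := by
  have h01 : (0 : Fin (d + 2)) ≠ 1 := by simp [Fin.ext_iff]
  ext r s
  by_cases hr1 : r = 1 <;> by_cases hr0 : r = 0 <;>
    simp_all [Matrix.updateRow_apply]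

private lemma det_bilin_expand {d : ℕ} (M : Matrix (Fin (d + 2)) (Fin (d + 2)) ℝ)
    (x y : Fin (d + 2) → ℝ) :
    ((M.updateRow 0 x).updateRow 1 y).det
      = ∑ r, ∑ s, x r * y s *
        ((M.updateRow 0 (fun j => if r = j then 1 else 0)).updateRow 1
          (fun j => if s = j then 1 else 0)).det := by
  conv_lhs => rw [pi_eq_sum_univ y, det_updateRow_finset_sum]
  have hstep : ∀ s' : Fin (d + 2),
      ((M.updateRow 0 x).updateRow 1 (y s' • fun j => if s' = j then (1:ℝ) else 0)).det
        = y s' * ∑ r, x r * ((M.updateRow 0 (fun j => if r = j then 1 else 0)).updateRow 1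
            (fun j => if s' = j then 1 else 0)).det := by
    intro s'
    rw [Matrix.det_updateRow_smul]
    congr 1
    rw [updateRow_comm01]
    conv_lhs => rw [pi_eq_sum_univ x, det_updateRow_finset_sum]
    refine Finset.sum_congr rfl fun r _ => ?_
    rw [Matrix.det_updateRow_smul, updateRow_comm01]
  rw [Finset.sum_congr rfl fun s' _ => hstep s', Finset.sum_comm]
  refine Finset.sum_congr rfl fun r _ => ?_
  rw [Finset.mul_sum]
  refine Finset.sum_congr rfl fun s _ => ?_
  ring

private lemma skew_bollobas_two {Q : Type*} [Fintype Q] [DecidableEq Q] (b m : ℕ)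
    (P B : Fin m → Finset Q) (hP : ∀ i, (P i).card = 2) (hB : ∀ i, (B i).card = b)
    (hdisj : ∀ i, ∀ x ∈ P i, x ∉ B i)
    (hmeet : ∀ j i : Fin m, j < i → ∃ x ∈ P j, x ∈ B i) :
    m ≤ (b + 2).choose 2 := by
  rcases Nat.eq_zero_or_pos m with hm | hm
  · omega
  choose p q hpq hPeq using fun i => Finset.card_eq_two.mp (hP i)
  set q₀ : Q := p ⟨0, hm⟩ with hq₀
  set t : Q → ℝ := fun x => ((Fintype.equivFin Q x : ℕ) : ℝ) with ht_def
  have ht : Function.Injective t := by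
    intro x y h
    exact (Fintype.equivFin Q).injective (Fin.val_injective (Nat.cast_injective h))
  set L : Fin m → List Q := fun i => (B i).toList with hL_def
  have hLlen : ∀ i, (L i).length = b := fun i => by
    rw [hL_def]; rw [Finset.length_toList, hB i]
  have hLnd : ∀ i, (L i).Nodup := fun i => Finset.nodup_toList _
  have hLmem : ∀ i x, x ∈ L i ↔ x ∈ B i := fun i x => Finset.mem_toList
  set u : List Q → Fin (b + 2) → ℝ := fun l c => t (l.getD (c : ℕ) q₀) with hu_def
  set v : Q → Fin (b + 2) → ℝ := fun x c => t x ^ (c : ℕ) with hv_def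
  -- K1 : duplicated value gives zero determinant
  have K1 : ∀ (l : List Q) (c c' : Fin (b + 2)), c < c' →
      l.getD (c : ℕ) q₀ = l.getD (c' : ℕ) q₀ → (Matrix.vandermonde (u l)).det = 0 := by
    intro l c c' hlt he
    rw [Matrix.det_vandermonde]
    refine Finset.prod_eq_zero (Finset.mem_univ c) ?_
    refine Finset.prod_eq_zero (Finset.mem_Ioi.mpr hlt) ?_
    simp only [hu_def, he, sub_self]
  -- K2 : nodup list of full length gives nonzero determinant
  have K2 : ∀ l : List Q, l.length = b + 2 → l.Nodup →
      (Matrix.vandermonde (u l)).det ≠ 0 := by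
    intro l hlen hnd
    rw [Matrix.det_vandermonde_ne_zero_iff]
    intro c c' he
    simp only [hu_def] at he
    have hc : (c : ℕ) < l.length := by rw [hlen]; exact c.isLt
    have hc' : (c' : ℕ) < l.length := by rw [hlen]; exact c'.isLt
    rw [List.getD_eq_getElem _ _ hc, List.getD_eq_getElem _ _ hc'] at he
    exact Fin.ext ((hnd.getElem_inj_iff).mp (ht he))

  -- base matrices and the bilinear determinant form
  set Mat : Fin m → Matrix (Fin (b + 2)) (Fin (b + 2)) ℝ :=
    fun i => Matrix.vandermonde (u (q₀ :: q₀ :: L i)) with hMat_def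
  have hrow : ∀ (i : Fin m) (a c : Q),
      ((Mat i).updateRow 0 (v a)).updateRow 1 (v c)
        = Matrix.vandermonde (u (a :: c :: L i)) := by
    intro i a c
    ext r s
    rcases r with ⟨rv, hr⟩
    rcases rv with _ | _ | rr <;>
      simp [Matrix.updateRow_apply, Matrix.vandermonde_apply, hv_def, hu_def,
        Fin.ext_iff, List.getD_cons_zero, List.getD_cons_succ, hMat_def]
  set D : Fin m → Q → Q → ℝ :=
    fun i a c => (Matrix.vandermonde (u (a :: c :: L i))).det with hD_def
  -- K3 : antisymmetry
  have h01 : (0 : Fin (b + 2)) ≠ 1 := by simp [Fin.ext_iff]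
  have hswapfun : ∀ (i : Fin m) (a c : Q),
      u (c :: a :: L i) = (u (a :: c :: L i)) ∘ (Equiv.swap (0 : Fin (b + 2)) 1) := by
    intro i a c
    funext x
    rcases x with ⟨xv, hx⟩
    rcases xv with _ | _ | xx
    · have : (⟨0, hx⟩ : Fin (b + 2)) = 0 := rfl
      rw [this]
      simp [hu_def, Equiv.swap_apply_left]
    · have : (⟨1, hx⟩ : Fin (b + 2)) = 1 := rfl
      rw [this]
      simp [hu_def, Equiv.swap_apply_right]
    · have hne0 : (⟨xx + 2, hx⟩ : Fin (b + 2)) ≠ 0 := by simp [Fin.ext_iff]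
      have hne1 : (⟨xx + 2, hx⟩ : Fin (b + 2)) ≠ 1 := by simp [Fin.ext_iff]
      simp [hu_def, Equiv.swap_apply_of_ne_of_ne hne0 hne1]
  have K3 : ∀ (i : Fin m) (a c : Q), D i c a = - D i a c := by
    intro i a c
    have h1 : Matrix.vandermonde (u (c :: a :: L i))
        = (Matrix.vandermonde (u (a :: c :: L i))).submatrix
            (Equiv.swap (0 : Fin (b + 2)) 1) id := by
      ext r s
      simp [Matrix.vandermonde_apply, hswapfun i a c, Matrix.submatrix_apply]
    rw [hD_def]
    simp only []
    rw [h1, Matrix.det_permute, Equiv.Perm.sign_swap h01]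
    simp

  -- the linear functionals and test vectors
  set coef : Fin m → Fin (b + 2) → Fin (b + 2) → ℝ := fun i r s =>
    (((Mat i).updateRow 0 (fun j => if r = j then 1 else 0)).updateRow 1
      (fun j => if s = j then 1 else 0)).det with hcoef_def
  set w : Fin m → Matrix (Fin (b + 2)) (Fin (b + 2)) ℝ := fun j =>
    Matrix.of fun r s => v (p j) r * v (q j) s - v (q j) r * v (p j) s with hw_def
  set F : Fin m → Matrix (Fin (b + 2)) (Fin (b + 2)) ℝ → ℝ := fun i M =>
    ∑ r, ∑ s, M r s * coef i r s with hF_def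
  have hDexp : ∀ (i : Fin m) (a c : Q),
      D i a c = ∑ r, ∑ s, v a r * v c s * coef i r s := by
    intro i a c
    rw [hD_def]
    simp only []
    rw [← hrow i a c, det_bilin_expand]
  have hF : ∀ i j, F i (w j) = D i (p j) (q j) - D i (q j) (p j) := by
    intro i j
    rw [hF_def]
    simp only []
    rw [hDexp i (p j) (q j), hDexp i (q j) (p j), ← Finset.sum_sub_distrib]
    refine Finset.sum_congr rfl fun r _ => ?_
    rw [← Finset.sum_sub_distrib]
    refine Finset.sum_congr rfl fun s _ => ?_
    simp only [hw_def, Matrix.of_apply]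
    ring
  -- triangularity
  have hzero : ∀ j i : Fin m, j < i → F i (w j) = 0 := by
    intro j i hji
    obtain ⟨x, hxP, hxB⟩ := hmeet j i hji
    obtain ⟨r, hrlen, hrx⟩ := List.mem_iff_getElem.mp ((hLmem i x).mpr hxB)
    have hrb : r < b := by rw [hLlen i] at hrlen; exact hrlen
    have hz : ∀ a c : Q, x = a ∨ x = c → D i a c = 0 := by
      intro a c hac
      have hget2 : (a :: c :: L i).getD
          ((( ⟨r + 2, by omega⟩ : Fin (b + 2)) : ℕ)) q₀ = x := by
        simp only [Fin.val_mk, List.getD_cons_succ]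
        rw [List.getD_eq_getElem _ _ hrlen, hrx]
      rcases hac with hac | hac
      · refine K1 _ (0 : Fin (b + 2)) ⟨r + 2, by omega⟩ ?_ ?_
        · simp [Fin.lt_def]
        · rw [hget2]
          simp [← hac]
      · refine K1 _ (1 : Fin (b + 2)) ⟨r + 2, by omega⟩ ?_ ?_
        · simp [Fin.lt_def]
        · rw [hget2]
          simp [← hac]
    have hx' : x = p j ∨ x = q j := by
      have := hPeq j ▸ hxP
      simpa using this
    rw [hF i j, hz _ _ hx', hz _ _ hx'.symm, sub_zero]
  -- nonvanishing on the diagonal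
  have hdiag : ∀ i : Fin m, F i (w i) ≠ 0 := by
    intro i
    have hnd : (p i :: q i :: L i).Nodup := by
      refine List.nodup_cons.mpr ⟨?_, List.nodup_cons.mpr ⟨?_, hLnd i⟩⟩
      · intro hmem
        rcases List.mem_cons.mp hmem with h | h
        · exact hpq i h
        · exact hdisj i (p i) (by rw [hPeq i]; simp) ((hLmem i _).mp h)
      · intro hmem
        exact hdisj i (q i) (by rw [hPeq i]; simp) ((hLmem i _).mp hmem)
    have hlen : (p i :: q i :: L i).length = b + 2 := by
      simp [hLlen i]
    have hD0 : D i (p i) (q i) ≠ 0 := K2 _ hlen hnd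
    rw [hF i i, K3 i (p i) (q i)]
    intro hcontra
    apply hD0
    linarith [hcontra]

  -- F is linear in the matrix argument
  have hFlin : ∀ (i : Fin m) (g : Fin m → ℝ),
      F i (∑ j, g j • w j) = ∑ j, g j * F i (w j) := by
    intro i g
    simp only [hF_def]
    calc (∑ r, ∑ s, (∑ j, g j • w j) r s * coef i r s)
        = ∑ r, ∑ s, ∑ j, g j * (w j r s * coef i r s) := by
          refine Finset.sum_congr rfl fun r _ => Finset.sum_congr rfl fun s _ => ?_
          rw [Matrix.sum_apply, Finset.sum_mul]
          refine Finset.sum_congr rfl fun j _ => ?_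
          rw [Matrix.smul_apply, smul_eq_mul, mul_assoc]
      _ = ∑ r, ∑ j, ∑ s, g j * (w j r s * coef i r s) :=
          Finset.sum_congr rfl fun r _ => Finset.sum_comm
      _ = ∑ j, ∑ r, ∑ s, g j * (w j r s * coef i r s) := Finset.sum_comm
      _ = ∑ j, g j * ∑ r, ∑ s, w j r s * coef i r s := by
          refine Finset.sum_congr rfl fun j _ => ?_
          rw [Finset.mul_sum]
          exact Finset.sum_congr rfl fun r _ => (Finset.mul_sum _ _ _).symm
  -- linear independence of the w's
  have hli : LinearIndependent ℝ w := by
    rw [Fintype.linearIndependent_iff]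
    intro g hg
    by_contra hne
    push_neg at hne
    obtain ⟨i1, hi1⟩ := hne
    have hsne : (Finset.univ.filter fun i => g i ≠ 0).Nonempty :=
      ⟨i1, by simp [hi1]⟩
    set i₀ := (Finset.univ.filter fun i => g i ≠ 0).max' hsne with hi₀
    have hgi₀ : g i₀ ≠ 0 := by
      have := (Finset.univ.filter fun i => g i ≠ 0).max'_mem hsne
      rw [← hi₀] at this
      simpa using this
    have h0 : F i₀ (∑ j, g j • w j) = 0 := by
      rw [hg, hF_def]
      simp
    rw [hFlin] at h0
    rw [Finset.sum_eq_single i₀ ?_ (by simp)] at h0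
    · exact hgi₀ (by
        rcases mul_eq_zero.mp h0 with h | h
        · exact h
        · exact absurd h (hdiag i₀))
    · intro j _ hj
      rcases lt_or_gt_of_ne hj with h | h
      · rw [hzero j i₀ h, mul_zero]
      · have : g j = 0 := by
          by_contra hgj
          have hmem : j ∈ Finset.univ.filter fun i => g i ≠ 0 := by simp [hgj]
          have := Finset.le_max' _ j hmem
          rw [← hi₀] at this
          exact absurd h (not_lt.mpr this)
        rw [this, zero_mul]
  -- all w's lie in the span of a set of size (b+2).choose 2
  set E : Finset (Matrix (Fin (b + 2)) (Fin (b + 2)) ℝ) :=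
    (Finset.univ.filter fun rs : Fin (b + 2) × Fin (b + 2) => rs.1 < rs.2).image
      fun rs => Matrix.single rs.1 rs.2 (1 : ℝ)
        - Matrix.single rs.2 rs.1 1 with hE_def
  have hmem : ∀ j, w j ∈ Submodule.span ℝ (E : Set (Matrix (Fin (b + 2)) (Fin (b + 2)) ℝ)) := by
    intro j
    have hw : w j = ∑ rs ∈ Finset.univ.filter
        (fun rs : Fin (b + 2) × Fin (b + 2) => rs.1 < rs.2),
        (v (p j) rs.1 * v (q j) rs.2 - v (q j) rs.1 * v (p j) rs.2) •
          (Matrix.single rs.1 rs.2 (1 : ℝ) - Matrix.single rs.2 rs.1 1) := by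
      have hstd : ∀ (i1 j1 a c : Fin (b + 2)),
          Matrix.single i1 j1 (1 : ℝ) a c = if (i1, j1) = (a, c) then 1 else 0 := by
        intro i1 j1 a c
        by_cases h : (i1, j1) = (a, c)
        · have h1 : i1 = a := (Prod.ext_iff.mp h).1
          have h2 : j1 = c := (Prod.ext_iff.mp h).2
          simp [Matrix.single, h, h1, h2]
        · have h' : ¬(i1 = a ∧ j1 = c) := fun hc => h (Prod.ext hc.1 hc.2)
          simp [Matrix.single, h, h']
      ext a c
      rw [Matrix.sum_apply]
      have hsummand : ∀ rs ∈ Finset.univ.filter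
          (fun rs : Fin (b + 2) × Fin (b + 2) => rs.1 < rs.2),
          (((v (p j) rs.1 * v (q j) rs.2 - v (q j) rs.1 * v (p j) rs.2) •
            (Matrix.single rs.1 rs.2 (1 : ℝ) - Matrix.single rs.2 rs.1 1) :
              Matrix (Fin (b + 2)) (Fin (b + 2)) ℝ)) a c
          = (if rs = (a, c) then (v (p j) a * v (q j) c - v (q j) a * v (p j) c) else 0)
            + (if rs = (c, a) then (v (p j) a * v (q j) c - v (q j) a * v (p j) c) else 0) := by
        intro rs hrs
        simp only [Finset.mem_filter, Finset.mem_univ, true_and] at hrs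
        rw [Matrix.smul_apply, Matrix.sub_apply, hstd, hstd]
        have hflip : ((rs.2, rs.1) = (a, c)) ↔ (rs = (c, a)) := by
          constructor
          · intro h
            exact Prod.ext (Prod.ext_iff.mp h).2 (Prod.ext_iff.mp h).1
          · intro h; rw [h]
        have heta : ((rs.1, rs.2) = (a, c)) ↔ (rs = (a, c)) := by
          constructor
          · intro h
            exact Prod.ext (Prod.ext_iff.mp h).1 (Prod.ext_iff.mp h).2
          · intro h; rw [h]
        by_cases hA : rs = (a, c) <;> by_cases hB : rs = (c, a)
        · exfalso
          rw [hA] at hB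
          have h1 : a = c := (Prod.ext_iff.mp hB).1
          rw [hA] at hrs
          exact absurd (h1 ▸ hrs) (lt_irrefl _)
        · subst hA
          have hB' : ((c, a) : Fin (b + 2) × Fin (b + 2)) ≠ (a, c) :=
            fun hcon => hB hcon.symm
          simp [hB, hB']
        · subst hB
          have hA' : ((a, c) : Fin (b + 2) × Fin (b + 2)) ≠ (c, a) :=
            fun hcon => hA hcon.symm
          simp [hA, hA']
          ring
        · simp [hA, hB]
          intro h2a h1c
          exact absurd (Prod.ext h1c h2a) hB
      rw [Finset.sum_congr rfl hsummand, Finset.sum_add_distrib,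
        Finset.sum_ite_eq' _ ((a, c) : Fin (b + 2) × Fin (b + 2)),
        Finset.sum_ite_eq' _ ((c, a) : Fin (b + 2) × Fin (b + 2))]
      simp only [Finset.mem_filter, Finset.mem_univ, true_and, hw_def, Matrix.of_apply]
      rcases lt_trichotomy a c with h | h | h
      · rw [if_pos h, if_neg (asymm h), add_zero]
      · subst h
        simp
        ring
      · rw [if_neg (asymm h), if_pos h, zero_add]
    rw [hw]
    refine Submodule.sum_mem _ fun rs hrs => Submodule.smul_mem _ _ ?_
    exact Submodule.subset_span (Finset.mem_coe.mpr (Finset.mem_image_of_mem _ hrs))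
  -- conclude by a dimension count
  have hfd : FiniteDimensional ℝ
      (Submodule.span ℝ (E : Set (Matrix (Fin (b + 2)) (Fin (b + 2)) ℝ))) :=
    FiniteDimensional.span_of_finite ℝ E.finite_toSet
  set w' : Fin m → Submodule.span ℝ (E : Set (Matrix (Fin (b + 2)) (Fin (b + 2)) ℝ)) :=
    fun j => ⟨w j, hmem j⟩ with hw'_def
  have hli' : LinearIndependent ℝ w' := by
    apply LinearIndependent.of_comp (Submodule.subtype _)
    exact hli
  calc m = Fintype.card (Fin m) := (Fintype.card_fin m).symm
    _ ≤ Module.finrank ℝ (Submodule.span ℝ (E : Set (Matrix (Fin (b + 2)) (Fin (b + 2)) ℝ))) :=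
        hli'.fintype_card_le_finrank
    _ ≤ E.card := by
        have := finrank_span_finset_le_card (R := ℝ) E
        simpa [Set.finrank] using this
    _ ≤ _ := Finset.card_image_le
    _ ≤ (b + 2).choose 2 := fin_pairs_card _

/-- (Theorem 1(i)) given a Frankl–Pin sequence of length `ℓ`
consisting of reducible `k`-subsets and reducible pairs of a DFA `A` with `n`
states, in any synchronizing extension `B` of `A`, every `k`-subset `T` can be
taken, by a word of length at most `C(n−k+2, 2) − ℓ`, to a subset which is of
size `< k` or reducible in `A`. -/
theorem frankl_pin_reduction_bound {Q σA σB : Type*} [Fintype Q] [DecidableEq Q]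
    (n k ℓ : ℕ) (hcard : Fintype.card Q = n) (hk2 : 2 ≤ k) (hkn : k ≤ n)
    (actA : σA → Q → Q)
    (S P : Fin ℓ → Finset Q)
    (hSinj : Function.Injective S) (hPinj : Function.Injective P)
    (hScard : ∀ i, (S i).card = k) (hPcard : ∀ i, (P i).card = 2)
    (hSred : ∀ i, ReducibleIn actA (S i)) (hPred : ∀ i, ReducibleIn actA (P i))
    (hPS : ∀ i, P i ⊆ S i)
    (hFP : ∀ i j : Fin ℓ, j < i → ¬ P j ⊆ S i)
    (actB : σB → Q → Q) (ι : σA → σB) (hι : ∀ x, actB (ι x) = actA x)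
    (hsync : ∃ w : List σB, ∃ q0 : Q, ∀ q, wordAct actB w q = q0)
    (T : Finset Q) (hT : T.card = k) :
    ∃ w : List σB, w.length ≤ (n - k + 2).choose 2 - ℓ ∧
      ((T.image (wordAct actB w)).card < k ∨
        ReducibleIn actA (T.image (wordAct actB w))) := by
  classical
  set Pred : Finset Q → Prop := fun U => U.card < k ∨ ReducibleIn actA U with hPred_def
  obtain ⟨w₀, q0, hw₀⟩ := hsync
  have hTne : T.Nonempty := Finset.card_pos.mp (by omega)
  have hx0 : Pred (T.image (wordAct actB w₀)) := by
    left
    have himg : T.image (wordAct actB w₀) = {q0} := by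
      rw [Finset.image_congr (g := fun _ => q0) (fun q _ => hw₀ q)]
      exact Finset.image_const hTne q0
    rw [himg, Finset.card_singleton]
    omega
  have hex : ∃ nn : ℕ, ∃ w : List σB, w.length = nn ∧ Pred (T.image (wordAct actB w)) :=
    ⟨w₀.length, w₀, rfl, hx0⟩
  set m := Nat.find hex with hm_def
  obtain ⟨w, hwlen, hwP⟩ := Nat.find_spec hex
  rw [← hm_def] at hwlen
  have hmin : ∀ w' : List σB, Pred (T.image (wordAct actB w')) → m ≤ w'.length := by
    intro w' hw'
    by_contra hcon
    push_neg at hcon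
    exact Nat.find_min hex hcon ⟨w', rfl, hw'⟩
  clear_value m
  refine ⟨w, ?_, hwP⟩
  rcases Nat.eq_zero_or_pos m with hm0 | hm0
  · omega
  suffices h : m + ℓ ≤ (n - k + 2).choose 2 by rw [hwlen]; omega
  -- prefix images
  set Tt : ℕ → Finset Q := fun t => T.image (wordAct actB (w.take t)) with hTt
  have htakem : w.take m = w := by rw [← hwlen]; exact List.take_length ..
  have hTtm : Tt m = T.image (wordAct actB w) := by rw [hTt]; simp only [htakem]
  have hnotP : ∀ t, t < m → ¬ Pred (Tt t) := by
    intro t ht hP'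
    have hle := hmin (w.take t) hP'
    rw [List.length_take] at hle
    omega
  have hcardTt : ∀ t, t < m → (Tt t).card = k := by
    intro t ht
    have h1 : (Tt t).card ≤ k := by
      calc (Tt t).card ≤ T.card := Finset.card_image_le
        _ = k := hT
    have h2 := hnotP t ht
    rw [hPred_def] at h2
    push_neg at h2
    omega
  have hsplit : ∀ t t', t ≤ t' →
      Tt t' = (Tt t).image (wordAct actB ((w.take t').drop t)) := by
    intro t t' h1
    have h3 : w.take t ++ (w.take t').drop t = w.take t' := by
      conv_rhs => rw [← List.take_append_drop t (w.take t')]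
      rw [List.take_take, min_eq_left h1]
    calc Tt t' = T.image (wordAct actB (w.take t')) := rfl
      _ = T.image (wordAct actB (w.take t ++ (w.take t').drop t)) := by rw [h3]
      _ = (Tt t).image (wordAct actB ((w.take t').drop t)) := image_wordAct_append ..
  -- extract the final merged pair
  have hfinal : ∃ ts, ts ≤ m ∧ (∀ t, t < m → t ≤ ts) ∧ (Tt ts).card = k ∧
      ∃ a b : Q, a ≠ b ∧ a ∈ Tt ts ∧ b ∈ Tt ts ∧
        ∀ U : Finset Q, a ∈ U → b ∈ U → U.card ≤ k →
          Pred (U.image (wordAct actB (w.drop ts))) := by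
    have hPm : Pred (Tt m) := by rw [hTtm]; exact hwP
    by_cases hA : (Tt m).card < k
    · -- the final letter merges two states
      have himg : Tt m = (Tt (m - 1)).image (wordAct actB (w.drop (m - 1))) := by
        have := hsplit (m - 1) m (by omega)
        rwa [htakem] at this
      have hcard1 : (Tt (m - 1)).card = k := hcardTt _ (by omega)
      have hex2 : ∃ a ∈ Tt (m - 1), ∃ b ∈ Tt (m - 1), a ≠ b ∧
          wordAct actB (w.drop (m - 1)) a = wordAct actB (w.drop (m - 1)) b := by
        by_contra hcon
        push_neg at hcon
        have hinj : Set.InjOn (wordAct actB (w.drop (m - 1))) (Tt (m - 1)) := by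
          intro x hx y hy hxy
          by_contra hne
          exact hcon x hx y hy hne hxy
        have hc := Finset.card_image_of_injOn hinj
        rw [← himg] at hc
        omega
      obtain ⟨a, ha, b, hb, hne, heq⟩ := hex2
      refine ⟨m - 1, by omega, fun t ht => by omega, hcard1, a, b, hne, ha, hb, ?_⟩
      intro U haU hbU hUk
      left
      calc (U.image (wordAct actB (w.drop (m - 1)))).card < U.card :=
            merge_card _ U haU hbU hne heq
        _ ≤ k := hUk
    · -- the final set is reducible in A
      have hred : ReducibleIn actA (Tt m) := hPm.resolve_left hA
      obtain ⟨x, a, ha, b, hb, hne, heq⟩ := hred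
      have hdropm : w.drop m = ([] : List σB) := by rw [← hwlen]; exact List.drop_length ..
      have hcardm : (Tt m).card = k := by
        have h1 : (Tt m).card ≤ k := by
          calc (Tt m).card ≤ T.card := Finset.card_image_le
            _ = k := hT
        omega
      refine ⟨m, le_refl m, fun t ht => le_of_lt ht, hcardm, a, b, hne, ha, hb, ?_⟩
      intro U haU hbU hUk
      right
      have hid : U.image (wordAct actB (w.drop m)) = U := by
        rw [hdropm]
        ext y
        simp [wordAct]
      rw [hid]
      exact ⟨x, a, haU, b, hbU, hne, heq⟩
  obtain ⟨ts, hts_le, hts_all, hts_card, a, bb, hab, haT, hbT, hfin⟩ := hfinal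
  -- pull the pair back along the prefixes
  have hpair : ∀ t, t < m → ∃ pa pb : Q, pa ≠ pb ∧ pa ∈ Tt t ∧ pb ∈ Tt t ∧
      wordAct actB ((w.take ts).drop t) pa = a ∧
      wordAct actB ((w.take ts).drop t) pb = bb := by
    intro t ht
    have hsub := hsplit t ts (hts_all t ht)
    obtain ⟨pa, hpa, hpaa⟩ := Finset.mem_image.mp (hsub ▸ haT)
    obtain ⟨pb, hpb, hpbb⟩ := Finset.mem_image.mp (hsub ▸ hbT)
    exact ⟨pa, pb, fun hcon => hab (by rw [← hpaa, ← hpbb, hcon]), hpa, hpb, hpaa, hpbb⟩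
  choose pa pb hpab hpaT hpbT hpaEq hpbEq using hpair
  -- minimality: a later pair is never inside an earlier set
  have hKL : ∀ (t : ℕ) (ht : t < m) (t' : ℕ), t' < m → t' < t →
      ¬ ({pa t ht, pb t ht} : Finset Q) ⊆ Tt t' := by
    intro t ht t' ht' hlt hsubpair
    have hpa' : pa t ht ∈ Tt t' := hsubpair (by simp)
    have hpb' : pb t ht ∈ Tt t' := hsubpair (by simp)
    have himg : T.image (wordAct actB (w.take t' ++ ((w.take ts).drop t ++ w.drop ts))) =
        ((Tt t').image (wordAct actB ((w.take ts).drop t))).image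
          (wordAct actB (w.drop ts)) := by
      rw [image_wordAct_append, image_wordAct_append]
    have haU : a ∈ (Tt t').image (wordAct actB ((w.take ts).drop t)) :=
      Finset.mem_image.mpr ⟨_, hpa', hpaEq t ht⟩
    have hbU : bb ∈ (Tt t').image (wordAct actB ((w.take ts).drop t)) :=
      Finset.mem_image.mpr ⟨_, hpb', hpbEq t ht⟩
    have hUk : ((Tt t').image (wordAct actB ((w.take ts).drop t))).card ≤ k := by
      calc _ ≤ (Tt t').card := Finset.card_image_le
        _ = k := hcardTt t' ht'
    have hPred' : Pred (T.image (wordAct actB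
        (w.take t' ++ ((w.take ts).drop t ++ w.drop ts)))) := by
      rw [himg]
      exact hfin _ haU hbU hUk
    have hlen := hmin _ hPred'
    simp only [List.length_append, List.length_take, List.length_drop] at hlen
    have e1 : t' ≤ w.length := by rw [hwlen]; omega
    have e2 : ts ≤ w.length := by rw [hwlen]; omega
    rw [min_eq_left e1, min_eq_left e2, hwlen] at hlen
    have e3 : t ≤ ts := hts_all t ht
    omega
    -- assemble the combined sequence and apply the skew Bollobás bound
  have htau : ∀ i : Fin (ℓ + m), ¬ (i : ℕ) < ℓ → m - 1 - ((i : ℕ) - ℓ) < m := by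
    intro i hi
    omega
  have hskew := skew_bollobas_two (Q := Q) (n - k) (ℓ + m)
    (fun i => if h : (i : ℕ) < ℓ then P ⟨i, h⟩ else
      {pa (m - 1 - ((i : ℕ) - ℓ)) (htau i h), pb (m - 1 - ((i : ℕ) - ℓ)) (htau i h)})
    (fun i => (if h : (i : ℕ) < ℓ then S ⟨i, h⟩ else Tt (m - 1 - ((i : ℕ) - ℓ)))ᶜ)
    ?_ ?_ ?_ ?_
  · omega
  · -- pairs have two elements
    intro i
    by_cases h : (i : ℕ) < ℓ
    · simp only [dif_pos h]
      exact hPcard _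
    · simp only [dif_neg h]
      exact Finset.card_pair (hpab _ _)
  · -- complements have the right size
    intro i
    rw [Finset.card_compl, hcard]
    by_cases h : (i : ℕ) < ℓ
    · simp only [dif_pos h, hScard]
    · simp only [dif_neg h, hcardTt _ (htau i h)]
  · -- pairs inside their sets
    intro i x hx hxc
    rw [Finset.mem_compl] at hxc
    apply hxc
    by_cases h : (i : ℕ) < ℓ
    · simp only [dif_pos h]
      simp only [dif_pos h] at hx
      exact hPS _ hx
    · simp only [dif_neg h]
      simp only [dif_neg h] at hx
      rcases Finset.mem_insert.mp hx with rfl | h2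
      · exact hpaT _ _
      · rw [Finset.mem_singleton] at h2
        subst h2
        exact hpbT _ _
  · -- earlier pairs meet later complements
    intro j i hji
    have hji' : (j : ℕ) < (i : ℕ) := hji
    have hi2 : (i : ℕ) < ℓ + m := i.isLt
    by_cases hi : (i : ℕ) < ℓ
    · have hj : (j : ℕ) < ℓ := by omega
      have hns := hFP ⟨i, hi⟩ ⟨j, hj⟩ (Fin.mk_lt_mk.mpr hji')
      obtain ⟨x, hx, hxn⟩ := Finset.not_subset.mp hns
      refine ⟨x, ?_, Finset.mem_compl.mpr ?_⟩
      · simp only [dif_pos hj]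
        exact hx
      · simp only [dif_pos hi]
        exact hxn
    · by_cases hj : (j : ℕ) < ℓ
      · have hτ : m - 1 - ((i : ℕ) - ℓ) < m := htau i hi
        have hns : ¬ P ⟨j, hj⟩ ⊆ Tt (m - 1 - ((i : ℕ) - ℓ)) := by
          intro hsub
          exact hnotP _ hτ (Or.inr (reducibleIn_mono actA hsub (hPred ⟨j, hj⟩)))
        obtain ⟨x, hx, hxn⟩ := Finset.not_subset.mp hns
        refine ⟨x, ?_, Finset.mem_compl.mpr ?_⟩
        · simp only [dif_pos hj]
          exact hx
        · simp only [dif_neg hi]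
          exact hxn
      · have hti : m - 1 - ((i : ℕ) - ℓ) < m := htau i hi
        have htj : m - 1 - ((j : ℕ) - ℓ) < m := htau j hj
        have htlt : m - 1 - ((i : ℕ) - ℓ) < m - 1 - ((j : ℕ) - ℓ) := by omega
        have hns := hKL _ htj _ hti htlt
        obtain ⟨x, hx, hxn⟩ := Finset.not_subset.mp hns
        refine ⟨x, ?_, Finset.mem_compl.mpr ?_⟩
        · simp only [dif_neg hj]
          exact hx
        · simp only [dif_neg hi]
          exact hxn
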